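/- Consider a communication graph with two process components P and Q, where P consists of n consecutive send vertices each matched to one of n consecutive receive vertices in Q (arc i goes from the i-th send of P to the i-th receive of Q), in order. Then zero tokens suffice to avoid deadlock (every maximal colouring sequence completes), but n tokens on Q are required for the graph to be block free under receive-side buffering. -/

import Mathlib

/-! Formal framework: communication graphs and the red/yellow/green colouring game
(Brodsky–Pedersen–Wagner, "On the Complexity of Buffer Allocation in Message Passing Systems"),
with receive-side token pools. -/

inductive Colour : Type
  | red | yellow | green
deriving DecidableEq

/-- A communication graph: vertices are partitioned into start/send/receive/end vertices,
`pred u v` means `u` is the component predecessor of `v` (a process arc `u → v`),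
`matched u v` is a communication arc from send `u` to its matching receive `v`,
`comp v` is the index of the process component of `v`, and `pos v` is the position
of `v` within its component chain. -/
structure CommGraph (V : Type) where
  isStart : V → Prop
  isSend : V → Prop
  isRecv : V → Prop
  isEnd : V → Prop
  pred : V → V → Prop
  matched : V → V → Prop
  comp : V → ℕ
  pos : V → ℕ

namespace CommGraph

variable {V : Type}

/-- An arc of the communication graph (process arc or communication arc). -/
def GArc (G : CommGraph V) (u v : V) : Prop := G.pred u v ∨ G.matched u v

/-- Well-formedness of a communication graph: the vertex kinds partition `V`,
components are chains (unique predecessors, positions increase along process arcs),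
communication arcs go from sends to receives in different components and form a
partial matching, and the graph is acyclic (arcs admit no infinite descent). -/
structure WF (G : CommGraph V) : Prop where
  kinds : ∀ v, G.isStart v ∨ G.isSend v ∨ G.isRecv v ∨ G.isEnd v
  start_not_send : ∀ v, G.isStart v → ¬ G.isSend v
  start_not_recv : ∀ v, G.isStart v → ¬ G.isRecv v
  start_not_end : ∀ v, G.isStart v → ¬ G.isEnd v
  send_not_recv : ∀ v, G.isSend v → ¬ G.isRecv v
  send_not_end : ∀ v, G.isSend v → ¬ G.isEnd v
  recv_not_end : ∀ v, G.isRecv v → ¬ G.isEnd v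
  pred_unique : ∀ {u u' v}, G.pred u v → G.pred u' v → u = u'
  pred_comp : ∀ {u v}, G.pred u v → G.comp u = G.comp v
  pred_pos : ∀ {u v}, G.pred u v → G.pos v = G.pos u + 1
  start_no_pred : ∀ {u v}, G.pred u v → ¬ G.isStart v
  has_pred : ∀ v, ¬ G.isStart v → ∃ u, G.pred u v
  matched_send : ∀ {u v}, G.matched u v → G.isSend u
  matched_recv : ∀ {u v}, G.matched u v → G.isRecv v
  matched_comp : ∀ {u v}, G.matched u v → G.comp u ≠ G.comp v
  matched_unique_left : ∀ {u u' v}, G.matched u v → G.matched u' v → u = u'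
  matched_unique_right : ∀ {u v v'}, G.matched u v → G.matched u v' → v = v'
  send_has_match : ∀ v, G.isSend v → ∃ w, G.matched v w
  recv_has_match : ∀ v, G.isRecv v → ∃ w, G.matched w v
  dag : WellFounded fun u v => G.GArc u v

end CommGraph

/-- A state of the colouring game: the colouring, which receive vertices currently
hold a token on their incident communication arc, and the number of available
tokens in each (per-process, receive-side) pool. -/
structure St (V : Type) where
  col : V → Colour
  tok : V → Bool
  pool : ℕ → ℕ

/-- The names of the colouring rules. -/
inductive Rule : Type
  | sendYel | recvYel | recvYelTok | sendGrn | recvGrn | endYel | endGrn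
deriving DecidableEq

variable {V : Type}

/-- One move of the colouring game (receive-side buffering: the token used by the
buffered-receive rule `recvYelTok` comes from the pool of the receiving component,
and is returned when the receive turns green). -/
inductive Step [DecidableEq V] (G : CommGraph V) : Rule → St V → St V → Prop
  | sendYel {s : St V} {v u : V} :
      G.isSend v → s.col v = .red → G.pred u v → s.col u = .green →
      Step G .sendYel s ⟨Function.update s.col v .yellow, s.tok, s.pool⟩
  | recvYel {s : St V} {v u w : V} :
      G.isRecv v → s.col v = .red → G.matched w v → s.col w = .yellow →
      G.pred u v → s.col u = .green →
      Step G .recvYel s ⟨Function.update s.col v .yellow, s.tok, s.pool⟩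
  | recvYelTok {s : St V} {v w : V} :
      G.isRecv v → s.col v = .red → G.matched w v → s.col w = .yellow →
      0 < s.pool (G.comp v) →
      Step G .recvYelTok s ⟨Function.update s.col v .yellow,
        Function.update s.tok v true,
        Function.update s.pool (G.comp v) (s.pool (G.comp v) - 1)⟩
  | sendGrn {s : St V} {v r : V} :
      G.isSend v → s.col v = .yellow → G.matched v r → s.col r = .yellow →
      Step G .sendGrn s ⟨Function.update s.col v .green, s.tok, s.pool⟩
  | recvGrn {s : St V} {v u w : V} :
      G.isRecv v → s.col v = .yellow → G.pred u v → s.col u = .green →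
      G.matched w v → s.col w = .green →
      Step G .recvGrn s ⟨Function.update s.col v .green,
        Function.update s.tok v false,
        if s.tok v then
          Function.update s.pool (G.comp v) (s.pool (G.comp v) + 1)
        else s.pool⟩
  | endYel {s : St V} {v u : V} :
      G.isEnd v → s.col v = .red → G.pred u v → s.col u = .green →
      Step G .endYel s ⟨Function.update s.col v .yellow, s.tok, s.pool⟩
  | endGrn {s : St V} {v : V} :
      G.isEnd v → s.col v = .yellow →
      Step G .endGrn s ⟨Function.update s.col v .green, s.tok, s.pool⟩

/-- `IsSeq G s l` : the list `l` of (rule, state) pairs is a valid colouring sequence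
starting from state `s`. -/
def IsSeq [DecidableEq V] (G : CommGraph V) : St V → List (Rule × St V) → Prop
  | _, [] => True
  | s, p :: l => Step G p.1 s p.2 ∧ IsSeq G p.2 l

/-- The list of states visited by a colouring sequence. -/
def states (s0 : St V) (l : List (Rule × St V)) : List (St V) :=
  s0 :: l.map Prod.snd

/-- The final state of a colouring sequence. -/
def finalSt (s0 : St V) (l : List (Rule × St V)) : St V :=
  (states s0 l).getLast (by simp [states])

open Classical in
/-- The initial state: start vertices green, all others red, no tokens placed,
token pools given by the token assignment `B` (pool of component `i` holds `B i`). -/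
noncomputable def init (G : CommGraph V) (B : ℕ → ℕ) : St V :=
  ⟨fun v => if G.isStart v then Colour.green else Colour.red, fun _ => false, B⟩

/-- A state from which no colouring rule applies. -/
def MaximalFrom [DecidableEq V] (G : CommGraph V) (s : St V) : Prop :=
  ∀ ρ t, ¬ Step G ρ s t

/-- A state is complete when every vertex is green. -/
def Completes (s : St V) : Prop := ∀ v, s.col v = Colour.green

/-- A deadlocking colouring sequence from `s0`: a maximal sequence whose final
colouring has a non-green vertex. -/
def Deadlocks [DecidableEq V] (G : CommGraph V) (s0 : St V) (l : List (Rule × St V)) : Prop :=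
  IsSeq G s0 l ∧ MaximalFrom G (finalSt s0 l) ∧ ¬ Completes (finalSt s0 l)

/-- The system is safe (deadlock free) under token assignment `B`:
every maximal colouring sequence completes. -/
def DeadlockFree [DecidableEq V] (G : CommGraph V) (B : ℕ → ℕ) : Prop :=
  ∀ l, IsSeq G (init G B) l → MaximalFrom G (finalSt (init G B) l) →
    Completes (finalSt (init G B) l)

/-- A state blocks: some yellow send has a matching red receive to which the
buffered-receive rule cannot be applied (no token available). -/
def Blocked (G : CommGraph V) (s : St V) : Prop :=
  ∃ v r, G.matched v r ∧ s.col v = Colour.yellow ∧ s.col r = Colour.red ∧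
    s.pool (G.comp r) = 0

/-- The graph is block free under token assignment `B`: no colouring sequence blocks. -/
def BlockFree [DecidableEq V] (G : CommGraph V) (B : ℕ → ℕ) : Prop :=
  ∀ l, IsSeq G (init G B) l → ¬ Blocked G (finalSt (init G B) l)


/-- The two-component pipeline: component `0` is `start → n sends → end`,
component `1` is `start → n receives → end`, with the `i`-th send matched to the
`i`-th receive. -/
def pipeGraph (n : ℕ) : CommGraph (Fin 2 × Fin (n + 2)) where
  isStart v := (v.2 : ℕ) = 0
  isEnd v := (v.2 : ℕ) = n + 1
  isSend v := (v.1 : ℕ) = 0 ∧ 0 < (v.2 : ℕ) ∧ (v.2 : ℕ) < n + 1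
  isRecv v := (v.1 : ℕ) = 1 ∧ 0 < (v.2 : ℕ) ∧ (v.2 : ℕ) < n + 1
  pred u v := u.1 = v.1 ∧ (v.2 : ℕ) = (u.2 : ℕ) + 1
  matched u v := (u.1 : ℕ) = 0 ∧ (v.1 : ℕ) = 1 ∧ u.2 = v.2 ∧
    0 < (u.2 : ℕ) ∧ (u.2 : ℕ) < n + 1
  comp v := v.1
  pos v := v.2

/-!
Without tokens the rule `recvYelTok` never fires, and every reachable state satisfies an
invariant: a vertex leaves red only once its component predecessor is green, a receive is green
only once its send is, and a send is green only once its receive has left red. In a maximal such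
state the pipeline turns green position by position, since otherwise one of the rules `sendYel`,
`recvYel`, `sendGrn`, `recvGrn`, `endYel`, `endGrn` would still apply.

For the lower bound, the sender may send its first `B 1` messages while the receiver buffers each
of them with a token and receives none; the receiver's pool is then empty and the next send blocks.
-/

open Colour

section Game

variable {G : CommGraph V}

lemma finalSt_cons (s0 : St V) (p : Rule × St V) (l : List (Rule × St V)) :
    finalSt s0 (p :: l) = finalSt p.2 l := by
  cases l <;> rfl

lemma init_col_eq_green_iff {B : ℕ → ℕ} {v : V} : (init G B).col v = green ↔ G.isStart v := by
  simp [init]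

lemma init_col_ne_red_iff {B : ℕ → ℕ} {v : V} : (init G B).col v ≠ red ↔ G.isStart v := by
  simp [init]

structure UnbufferedInv (G : CommGraph V) (s : St V) : Prop where
  pool_eq_zero : ∀ i, s.pool i = 0
  tok_eq_false : ∀ v, s.tok v = false
  start_green : ∀ v, G.isStart v → s.col v = green
  pred_green : ∀ {u v}, G.pred u v → s.col v ≠ red → s.col u = green
  recv_ne_red : ∀ {u v}, G.matched u v → s.col u = green → s.col v ≠ red
  send_green : ∀ {u v}, G.matched u v → s.col v = green → s.col u = green

lemma UnbufferedInv.init (hG : G.WF) : UnbufferedInv G (init G fun _ => 0) where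
  pool_eq_zero _ := rfl
  tok_eq_false _ := rfl
  start_green _ hv := if_pos hv
  pred_green huv hv := absurd (init_col_ne_red_iff.1 hv) (hG.start_no_pred huv)
  recv_ne_red huv hu :=
    absurd (hG.matched_send huv) (hG.start_not_send _ (init_col_eq_green_iff.1 hu))
  send_green huv hv :=
    absurd (hG.matched_recv huv) (hG.start_not_recv _ (init_col_eq_green_iff.1 hv))

variable [DecidableEq V]

def Moves (G : CommGraph V) (s t : St V) : Prop := ∃ ρ, Step G ρ s t

lemma exists_isSeq_iff_reflTransGen {s0 t : St V} :
    (∃ l, IsSeq G s0 l ∧ finalSt s0 l = t) ↔ Relation.ReflTransGen (Moves G) s0 t := by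
  constructor
  · rintro ⟨l, hl, rfl⟩
    induction l generalizing s0 with
    | nil => rfl
    | cons p l ih => exact .head ⟨p.1, hl.1⟩ (finalSt_cons s0 p l ▸ ih hl.2)
  · intro h
    induction h using Relation.ReflTransGen.head_induction_on with
    | refl => exact ⟨[], trivial, rfl⟩
    | head hst _ ih =>
      obtain ⟨ρ, hst⟩ := hst
      obtain ⟨l, hl, hfin⟩ := ih
      exact ⟨(ρ, _) :: l, ⟨hst, hl⟩, (finalSt_cons _ _ l).trans hfin⟩

namespace Step

variable {ρ : Rule} {s t : St V} {x : V}

lemma col_eq_green (h : Step G ρ s t) (hx : s.col x = green) : t.col x = green := by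
  cases h <;> grind [Function.update_apply]

lemma col_ne_red (h : Step G ρ s t) (hx : s.col x ≠ red) : t.col x ≠ red := by
  cases h <;> grind [Function.update_apply]

lemma exists_pred_green_or_pool_pos (h : Step G ρ s t) (hx : s.col x = red)
    (hx' : t.col x ≠ red) :
    (∃ u, G.pred u x ∧ s.col u = green) ∨ 0 < s.pool (G.comp x) := by
  cases h <;> grind [Function.update_apply]

lemma green_cases (h : Step G ρ s t) (hx : s.col x ≠ green) (hx' : t.col x = green) :
    (G.isSend x ∧ ∃ r, G.matched x r ∧ s.col r = yellow) ∨
      (G.isRecv x ∧ ∃ w, G.matched w x ∧ s.col w = green) ∨ G.isEnd x := by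
  cases h <;> grind [Function.update_apply]

lemma pool_tok_of_zero (h : Step G ρ s t) (hp : ∀ i, s.pool i = 0) (ht : ∀ v, s.tok v = false) :
    (∀ i, t.pool i = 0) ∧ ∀ v, t.tok v = false := by
  cases h <;> simp_all [Function.update_apply]

end Step

lemma MaximalFrom.col_eq_green_of_isEnd {s : St V} {u v : V} (hmax : MaximalFrom G s)
    (hv : G.isEnd v) (huv : G.pred u v) (hu : s.col u = green) : s.col v = green := by
  rcases hc : s.col v with _ | _ | _
  · exact absurd (Step.endYel hv hc huv hu) (hmax _ _)
  · exact absurd (Step.endGrn hv hc) (hmax _ _)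
  · rfl

namespace UnbufferedInv

lemma step (hG : G.WF) {ρ : Rule} {s t : St V} (hs : UnbufferedInv G s) (h : Step G ρ s t) :
    UnbufferedInv G t := by
  obtain ⟨hp, ht⟩ := h.pool_tok_of_zero hs.pool_eq_zero hs.tok_eq_false
  refine ⟨hp, ht, fun v hv => h.col_eq_green (hs.start_green v hv), ?_, ?_, ?_⟩
  · intro u v huv hv
    by_cases hsv : s.col v = red
    · rcases h.exists_pred_green_or_pool_pos hsv hv with ⟨u', hu'v, hu'⟩ | hpos
      · exact h.col_eq_green (hG.pred_unique huv hu'v ▸ hu')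
      · exact absurd (hs.pool_eq_zero _) hpos.ne'
    · exact h.col_eq_green (hs.pred_green huv hsv)
  · intro u v huv hu
    by_cases hsu : s.col u = green
    · exact h.col_ne_red (hs.recv_ne_red huv hsu)
    · rcases h.green_cases hsu hu with ⟨-, r, hur, hr⟩ | ⟨hrecv, -⟩ | hend
      · exact h.col_ne_red (by simp [hG.matched_unique_right huv hur, hr])
      · exact absurd hrecv (hG.send_not_recv u (hG.matched_send huv))
      · exact absurd hend (hG.send_not_end u (hG.matched_send huv))
  · intro u v huv hv
    by_cases hsv : s.col v = green
    · exact h.col_eq_green (hs.send_green huv hsv)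
    · rcases h.green_cases hsv hv with ⟨hsend, -⟩ | ⟨-, w, hwv, hw⟩ | hend
      · exact absurd (hG.matched_recv huv) (hG.send_not_recv v hsend)
      · exact h.col_eq_green (hG.matched_unique_left huv hwv ▸ hw)
      · exact absurd hend (hG.recv_not_end v (hG.matched_recv huv))

lemma of_reflTransGen (hG : G.WF) {t : St V}
    (h : Relation.ReflTransGen (Moves G) (_root_.init G fun _ => 0) t) : UnbufferedInv G t := by
  induction h with
  | refl => exact .init hG
  | tail _ hst ih => exact ih.step hG hst.choose_spec

lemma col_eq_green_of_matched (hG : G.WF) {s : St V} (hs : UnbufferedInv G s)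
    (hmax : MaximalFrom G s) {x r u u' : V} (hxr : G.matched x r) (hux : G.pred u x)
    (hu : s.col u = green) (hu'r : G.pred u' r) (hu' : s.col u' = green) :
    s.col x = green ∧ s.col r = green := by
  have hx : s.col x = green := by
    rcases hcx : s.col x with _ | _ | _
    · exact absurd (Step.sendYel (hG.matched_send hxr) hcx hux hu) (hmax _ _)
    · exfalso
      rcases hcr : s.col r with _ | _ | _
      · exact hmax _ _ (Step.recvYel (hG.matched_recv hxr) hcr hxr hcx hu'r hu')
      · exact hmax _ _ (Step.sendGrn (hG.matched_send hxr) hcx hxr hcr)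
      · simpa [hcx] using hs.send_green hxr hcr
    · rfl
  refine ⟨hx, ?_⟩
  rcases hcr : s.col r with _ | _ | _
  · exact absurd hcr (hs.recv_ne_red hxr hx)
  · exact absurd (Step.recvGrn (hG.matched_recv hxr) hcr hu'r hu' hxr hx) (hmax _ _)
  · rfl

end UnbufferedInv

end Game

namespace pipeGraph

lemma wf (n : ℕ) : (pipeGraph n).WF where
  kinds v := by simp only [pipeGraph]; omega
  start_not_send _ := by simp only [pipeGraph]; omega
  start_not_recv _ := by simp only [pipeGraph]; omega
  start_not_end _ := by simp only [pipeGraph]; omega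
  send_not_recv _ := by simp only [pipeGraph]; omega
  send_not_end _ := by simp only [pipeGraph]; omega
  recv_not_end _ := by simp only [pipeGraph]; omega
  pred_unique h h' := by simp only [pipeGraph] at h h'; ext <;> omega
  pred_comp h := by simp [pipeGraph, h.1]
  pred_pos h := by simp [pipeGraph, h.2]
  start_no_pred h := by simp only [pipeGraph] at h ⊢; omega
  has_pred v hv := ⟨(v.1, ⟨v.2 - 1, by omega⟩), rfl, by simp only [pipeGraph] at hv ⊢; omega⟩
  matched_send h := by simp only [pipeGraph] at h ⊢; omega
  matched_recv h := by simp only [pipeGraph] at h ⊢; omega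
  matched_comp h := by simp only [pipeGraph] at h ⊢; omega
  matched_unique_left h h' := by simp only [pipeGraph] at h h'; ext <;> omega
  matched_unique_right h h' := by simp only [pipeGraph] at h h'; ext <;> omega
  send_has_match v hv := ⟨(1, v.2), hv.1, rfl, rfl, hv.2⟩
  recv_has_match v hv := ⟨(0, v.2), rfl, hv.1, rfl, hv.2⟩
  dag := Subrelation.wf (r := InvImage (· < ·) fun v => 2 * (v.2 : ℕ) + v.1)
    (fun h => by rcases h with h | h <;> simp only [pipeGraph, InvImage] at h ⊢ <;> omega)
    (InvImage.wf _ wellFounded_lt)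

lemma completes_of_maximal {n : ℕ} {s : St (Fin 2 × Fin (n + 2))}
    (hs : UnbufferedInv (pipeGraph n) s) (hmax : MaximalFrom (pipeGraph n) s) : Completes s := by
  have hgreen : ∀ j (hj : j < n + 2), s.col (0, ⟨j, hj⟩) = green ∧ s.col (1, ⟨j, hj⟩) = green := by
    intro j
    induction j with
    | zero => exact fun _ => ⟨hs.start_green _ rfl, hs.start_green _ rfl⟩
    | succ k ih =>
      intro hk
      obtain ⟨h0, h1⟩ := ih (by omega)
      have hpred (c : Fin 2) : (pipeGraph n).pred (c, ⟨k, by omega⟩) (c, ⟨k + 1, hk⟩) :=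
        ⟨rfl, rfl⟩
      by_cases hend : k + 1 = n + 1
      · exact ⟨hmax.col_eq_green_of_isEnd hend (hpred 0) h0,
          hmax.col_eq_green_of_isEnd hend (hpred 1) h1⟩
      · exact hs.col_eq_green_of_matched (wf n) hmax ⟨rfl, rfl, rfl, by simp, by simp; omega⟩
          (hpred 0) h0 (hpred 1) h1
  rintro ⟨c, j, hj⟩
  fin_cases c
  exacts [(hgreen j hj).1, (hgreen j hj).2]

theorem deadlockFree (n : ℕ) : DeadlockFree (pipeGraph n) fun _ => 0 := fun l hl hmax =>
  completes_of_maximal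
    (.of_reflTransGen (wf n) (exists_isSeq_iff_reflTransGen.1 ⟨l, hl, rfl⟩)) hmax


/-- The state in which the first `i` messages have been sent and buffered in component `1`,
none of them received. -/
def bufferedState (n : ℕ) (B : ℕ → ℕ) (i : ℕ) : St (Fin 2 × Fin (n + 2)) where
  col v := if (v.2 : ℕ) = 0 ∨ (v.1 : ℕ) = 0 ∧ (v.2 : ℕ) ≤ i then green
    else if (v.2 : ℕ) ≤ i then yellow else red
  tok v := decide ((v.1 : ℕ) = 1 ∧ 0 < (v.2 : ℕ) ∧ (v.2 : ℕ) ≤ i)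
  pool := Function.update B 1 (B 1 - i)

variable {n : ℕ} {B : ℕ → ℕ} {i : ℕ}

@[simp]
lemma comp_apply (v : Fin 2 × Fin (n + 2)) : (pipeGraph n).comp v = v.1 := rfl

@[simp]
lemma bufferedState_col_send (j : Fin (n + 2)) :
    (bufferedState n B i).col (0, j) = if (j : ℕ) ≤ i then green else red := by
  simp only [bufferedState]
  split_ifs <;> grind

@[simp]
lemma bufferedState_col_recv (j : Fin (n + 2)) :
    (bufferedState n B i).col (1, j) =
      if (j : ℕ) = 0 then green else if (j : ℕ) ≤ i then yellow else red := by
  simp [bufferedState]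

@[simp]
lemma bufferedState_pool_one : (bufferedState n B i).pool 1 = B 1 - i := by
  simp [bufferedState]

lemma bufferedState_zero : bufferedState n B 0 = init (pipeGraph n) B := by
  simp only [bufferedState, init, pipeGraph]
  congr 1
  · funext v; split_ifs <;> grind
  · funext v; simp; omega
  · simp

lemma bufferedState_succ (hi : i < n) (hB : i < B 1) :
    Relation.ReflTransGen (Moves (pipeGraph n)) (bufferedState n B i)
      (bufferedState n B (i + 1)) := by
  obtain ⟨j, hj⟩ : ∃ j : Fin (n + 2), (j : ℕ) = i + 1 := ⟨⟨i + 1, by omega⟩, rfl⟩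
  have hsend : (pipeGraph n).isSend (0, j) := ⟨rfl, by dsimp only; omega, by dsimp only; omega⟩
  have hrecv : (pipeGraph n).isRecv (1, j) := ⟨rfl, by dsimp only; omega, by dsimp only; omega⟩
  have hmatched : (pipeGraph n).matched (0, j) (1, j) := ⟨rfl, rfl, rfl, hsend.2⟩
  refine .tail (.tail (.single ⟨_, .sendYel hsend ?_ (u := (0, ⟨i, by omega⟩)) ⟨rfl, hj⟩ ?_⟩)
    ⟨_, .recvYelTok hrecv ?_ hmatched ?_ ?_⟩) ⟨.sendGrn, ?last⟩
  case last =>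
    convert Step.sendGrn hsend ?_ hmatched ?_ using 1
    · simp only [bufferedState, St.mk.injEq]
      refine ⟨funext fun v => ?_, funext fun v => ?_, funext fun c => ?_⟩ <;>
        simp only [Function.update_apply, comp_apply] <;> split_ifs <;> grind
    all_goals simp
  all_goals simp [hj, hB]

lemma reflTransGen_bufferedState (hi : i ≤ n) (hB : i ≤ B 1) :
    Relation.ReflTransGen (Moves (pipeGraph n)) (init (pipeGraph n) B) (bufferedState n B i) := by
  induction i with
  | zero => rw [bufferedState_zero]
  | succ i ih => exact (ih (by omega) (by omega)).trans (bufferedState_succ (by omega) (by omega))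

theorem le_of_blockFree (h : BlockFree (pipeGraph n) B) : n ≤ B 1 := by
  by_contra! hlt
  obtain ⟨j, hj⟩ : ∃ j : Fin (n + 2), (j : ℕ) = B 1 + 1 := ⟨⟨B 1 + 1, by omega⟩, rfl⟩
  have hsend : (pipeGraph n).isSend (0, j) := ⟨rfl, by dsimp only; omega, by dsimp only; omega⟩
  have hstep := Step.sendYel (s := bufferedState n B (B 1)) hsend (by simp [hj])
    (u := (0, ⟨B 1, by omega⟩)) ⟨rfl, hj⟩ (by simp)
  obtain ⟨l, hl, hfin⟩ := exists_isSeq_iff_reflTransGen.2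
    ((reflTransGen_bufferedState hlt.le le_rfl).tail ⟨_, hstep⟩)
  exact h l hl (hfin ▸ ⟨(0, j), (1, j), ⟨rfl, rfl, rfl, hsend.2⟩, by simp, by simp [hj], by simp⟩)

end pipeGraph

/-- **Example separating deadlock freedom from block freedom.** For the pipeline of
`n` messages from component `0` to component `1`: zero tokens suffice to avoid
deadlock (every maximal colouring sequence completes), but any receive-side
block-free token assignment must put at least `n` tokens on the receiving
component `1`. -/
theorem pipe_deadlockfree_but_needs_n_buffers (n : ℕ) :
    DeadlockFree (pipeGraph n) (fun _ => 0) ∧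
      ∀ B : ℕ → ℕ, BlockFree (pipeGraph n) B → n ≤ B 1 :=
  ⟨pipeGraph.deadlockFree n, fun _ => pipeGraph.le_of_blockFree⟩
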